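/- Let 𝔆 = ℂ·1 + span{E₁₂, E₁₃, E₂₃} ⊆ M₃(ℂ) and define δ : 𝔆 → 𝔆 by δ(λ·1 + x₁₂E₁₂ + x₁₃E₁₃ + x₂₃E₂₃) = (2x₁₃ − x₁₂ + x₂₃)·E₁₃. Then δ is a local derivation which is not a derivation: for every X ∈ 𝔆 there exists a derivation d of 𝔆 with δ(X) = d(X), yet there exist X, Y ∈ 𝔆 with δ(XY) ≠ δ(X)Y + Xδ(Y). -/

import Mathlib

/-!
Every linear map `d` on `𝔆` with `d 1 = 0`, `d E₁₂ = α₁E₁₂ + α₂E₁₃`, `d E₂₃ = β₁E₂₃ + β₂E₁₃` and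
`d E₁₃ = (α₁ + β₁)E₁₃` is a derivation. At a single point `λ + aE₁₂ + bE₁₃ + cE₂₃` the value
`(2b − a + c)E₁₃` of `δ` is attained by one of them: take `α₁ = 2, β₂ = 1` if `a = 0`, and
`α₂ = (2b − a)/a, β₂ = 1` otherwise. But `δ` fails the Leibniz rule on `E₁₂ · E₂₃ = E₁₃`:
`δ(E₁₃) = 2E₁₃`, whereas `δ(E₁₂)E₂₃ + E₁₂δ(E₂₃) = −E₁₃E₂₃ + E₁₂E₁₃ = 0`.
-/

/-- Standard matrix units in `M₃(ℂ)`. -/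
def E₁₂ : Matrix (Fin 3) (Fin 3) ℂ := Matrix.single 0 1 1
def E₁₃ : Matrix (Fin 3) (Fin 3) ℂ := Matrix.single 0 2 1
def E₂₃ : Matrix (Fin 3) (Fin 3) ℂ := Matrix.single 1 2 1

/-- The set `𝔆 = ℂ·1 + span{E₁₂, E₁₃, E₂₃} ⊆ M₃(ℂ)`. -/
def frakC : Set (Matrix (Fin 3) (Fin 3) ℂ) :=
  {M | ∃ l a b c : ℂ, M = l • 1 + a • E₁₂ + b • E₁₃ + c • E₂₃}

theorem frakC_coords_mul (l a b c l' a' b' c' : ℂ) :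
    (l • (1 : Matrix (Fin 3) (Fin 3) ℂ) + a • E₁₂ + b • E₁₃ + c • E₂₃) *
        (l' • 1 + a' • E₁₂ + b' • E₁₃ + c' • E₂₃) =
      (l * l') • 1 + (l * a' + a * l') • E₁₂ + (l * b' + a * c' + b * l') • E₁₃ +
        (l * c' + c * l') • E₂₃ := by
  ext i j
  fin_cases i <;> fin_cases j <;>
    simp [E₁₂, E₁₃, E₂₃, Matrix.mul_apply, Fin.sum_univ_three, Matrix.single, Matrix.one_apply]

/-- The derivation of `𝔆` with `E₁₂ ↦ α₁E₁₂ + α₂E₁₃` and `E₂₃ ↦ β₁E₂₃ + β₂E₁₃`, extended to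
`M₃(ℂ)` through the entries `(0,1)`, `(0,2)`, `(1,2)`. -/
noncomputable def frakCDerivation (α₁ α₂ β₁ β₂ : ℂ) :
    Matrix (Fin 3) (Fin 3) ℂ →ₗ[ℂ] Matrix (Fin 3) (Fin 3) ℂ where
  toFun M := (α₁ * M 0 1) • E₁₂ + (α₂ * M 0 1 + (α₁ + β₁) * M 0 2 + β₂ * M 1 2) • E₁₃ +
    (β₁ * M 1 2) • E₂₃
  map_add' M N := by
    simp only [Matrix.add_apply]
    module
  map_smul' r M := by
    simp only [Matrix.smul_apply, smul_eq_mul, RingHom.id_apply]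
    module

theorem frakCDerivation_apply (α₁ α₂ β₁ β₂ l a b c : ℂ) :
    frakCDerivation α₁ α₂ β₁ β₂ (l • 1 + a • E₁₂ + b • E₁₃ + c • E₂₃) =
      (0 : ℂ) • 1 + (α₁ * a) • E₁₂ + (α₂ * a + (α₁ + β₁) * b + β₂ * c) • E₁₃ +
        (β₁ * c) • E₂₃ := by
  simp [frakCDerivation, E₁₂, E₁₃, E₂₃, Matrix.single]

theorem mapsTo_frakCDerivation (α₁ α₂ β₁ β₂ : ℂ) :
    Set.MapsTo (frakCDerivation α₁ α₂ β₁ β₂) frakC frakC := by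
  rintro X ⟨l, a, b, c, rfl⟩
  exact ⟨_, _, _, _, frakCDerivation_apply α₁ α₂ β₁ β₂ l a b c⟩

theorem frakCDerivation_mul (α₁ α₂ β₁ β₂ : ℂ) :
    ∀ X ∈ frakC, ∀ Y ∈ frakC,
      frakCDerivation α₁ α₂ β₁ β₂ (X * Y) =
        frakCDerivation α₁ α₂ β₁ β₂ X * Y + X * frakCDerivation α₁ α₂ β₁ β₂ Y := by
  rintro X ⟨l, a, b, c, rfl⟩ Y ⟨l', a', b', c', rfl⟩
  simp only [frakC_coords_mul, frakCDerivation_apply]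
  module

theorem exists_frakCDerivation_apply_eq (l a b c : ℂ) :
    ∃ α₁ α₂ β₂ : ℂ, frakCDerivation α₁ α₂ 0 β₂ (l • 1 + a • E₁₂ + b • E₁₃ + c • E₂₃) =
      (2 * b - a + c) • E₁₃ := by
  rcases eq_or_ne a 0 with rfl | ha
  · refine ⟨2, 0, 1, ?_⟩
    rw [frakCDerivation_apply]
    module
  · refine ⟨0, (2 * b - a) / a, 1, ?_⟩
    rw [frakCDerivation_apply, div_mul_cancel₀ _ ha]
    module

/-- Elements of `𝔆`, and products of such elements, are written in their unique coordinates
with respect to `1, E₁₂, E₁₃, E₂₃`. -/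
theorem crist_local_derivation_not_derivation :
    -- δ is a local derivation
    (∀ l a b c : ℂ,
      ∃ d : Matrix (Fin 3) (Fin 3) ℂ →ₗ[ℂ] Matrix (Fin 3) (Fin 3) ℂ,
        Set.MapsTo d frakC frakC ∧
        (∀ X ∈ frakC, ∀ Y ∈ frakC, d (X * Y) = d X * Y + X * d Y) ∧
        d (l • 1 + a • E₁₂ + b • E₁₃ + c • E₂₃) = (2 * b - a + c) • E₁₃) ∧
    -- δ is not a derivation
    (∃ l a b c l' a' b' c' L A B C : ℂ,
      (l • (1 : Matrix (Fin 3) (Fin 3) ℂ) + a • E₁₂ + b • E₁₃ + c • E₂₃) *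
          (l' • 1 + a' • E₁₂ + b' • E₁₃ + c' • E₂₃) =
        L • 1 + A • E₁₂ + B • E₁₃ + C • E₂₃ ∧
      (2 * B - A + C) • E₁₃ ≠
        ((2 * b - a + c) • E₁₃) * (l' • 1 + a' • E₁₂ + b' • E₁₃ + c' • E₂₃) +
          (l • 1 + a • E₁₂ + b • E₁₃ + c • E₂₃) * ((2 * b' - a' + c') • E₁₃)) := by
  refine ⟨fun l a b c => ?_, ⟨0, 1, 0, 0, 0, 0, 0, 1, 0, 0, 1, 0, ?_, ?_⟩⟩
  · obtain ⟨α₁, α₂, β₂, h⟩ := exists_frakCDerivation_apply_eq l a b c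
    exact ⟨_, mapsTo_frakCDerivation α₁ α₂ 0 β₂, frakCDerivation_mul α₁ α₂ 0 β₂, h⟩
  · rw [frakC_coords_mul]; norm_num
  · intro h
    simpa [E₁₂, E₁₃, E₂₃, Matrix.mul_apply, Matrix.single] using congrFun (congrFun h 0) 2
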